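/- arXiv:2308.10084 — 3 statements merged into one kernel-verified Lean document; each statement's English description precedes it below -/
import Mathlib

section
/- For all real numbers x and y with 1 ≤ y ≤ x, one has -N(x)/x = Σ_{k ≤ y} (Λ(k)/k)·(M(x/k)/(x/k)) + Σ_{j ≤ x/y} (μ(j)/j)·((ψ(x/j) - x/j)/(x/j)) - ((ψ(y)-y)/y)·(M(x/y)/(x/y)) + m₁(x/y). -/
open Finset Real ArithmeticFunction
open scoped ArithmeticFunction.Moebius

noncomputable def M (x : ℝ) : ℝ := ∑ n ∈ Finset.Icc 1 ⌊x⌋₊, (μ n : ℝ)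

noncomputable def N (x : ℝ) : ℝ := ∑ n ∈ Finset.Icc 1 ⌊x⌋₊, (μ n : ℝ) * Real.log n

noncomputable def ψ (x : ℝ) : ℝ := ∑ n ∈ Finset.Icc 1 ⌊x⌋₊, Λ n

noncomputable def m (x : ℝ) : ℝ := ∑ n ∈ Finset.Icc 1 ⌊x⌋₊, (μ n : ℝ) / n

noncomputable def m₁ (x : ℝ) : ℝ := m x - M x / x

noncomputable def A (t : ℝ) : ℝ :=
  (⌊t⌋ : ℝ) - (⌊t/2⌋ : ℝ) - (⌊t/3⌋ : ℝ) - (⌊t/5⌋ : ℝ) + (⌊t/30⌋ : ℝ)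

/-!
Since `∑_{d ∣ n} μ(d) log d = -Λ(n)`, Möbius inversion gives `μ log = -(Λ * μ)`, so `-N(x)` is
the summatory function of the Dirichlet convolution `Λ * μ`. The Dirichlet hyperbola method, split
at `k = y`, writes it as `∑_{k ≤ y} Λ(k) M(x/k) + ∑_{j ≤ x/y} μ(j) ψ(x/j) - ψ(y) M(x/y)`.
Dividing by `x`, the terms `-μ(j)/j` and `M(x/y)/(x/y)` produced by normalising each summand add
up to `-m₁(x/y)`.
-/

section Floor

variable {K : Type*} [Semiring K] [LinearOrder K] [IsStrictOrderedRing K] [FloorSemiring K]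

lemma Nat.floor_mul_floor_le {a b : K} (ha : 0 ≤ a) (hb : 0 ≤ b) : ⌊a⌋₊ * ⌊b⌋₊ ≤ ⌊a * b⌋₊ := by
  apply Nat.le_floor
  push_cast
  exact _root_.mul_le_mul (Nat.floor_le ha) (Nat.floor_le hb) (Nat.cast_nonneg _) ha

lemma Nat.floor_mul_lt_succ_mul_succ {a b : K} (ha : 0 ≤ a) (hb : 0 ≤ b) :
    ⌊a * b⌋₊ < (⌊a⌋₊ + 1) * (⌊b⌋₊ + 1) := by
  rw [Nat.floor_lt (mul_nonneg ha hb)]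
  push_cast
  exact _root_.mul_lt_mul'' (Nat.lt_floor_add_one a) (Nat.lt_floor_add_one b) ha hb

end Floor

namespace ArithmeticFunction

variable {R : Type*} [Ring R]

def hyperbolaRegion (X : ℕ) : Finset (ℕ × ℕ) := {p ∈ Icc 1 X ×ˢ Icc 1 X | p.1 * p.2 ≤ X}

lemma mem_hyperbolaRegion {X : ℕ} {p : ℕ × ℕ} :
    p ∈ hyperbolaRegion X ↔ 1 ≤ p.1 ∧ 1 ≤ p.2 ∧ p.1 * p.2 ≤ X := by
  obtain ⟨k, j⟩ := p
  simp only [hyperbolaRegion, mem_filter, mem_product, mem_Icc]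
  constructor
  · rintro ⟨⟨⟨hk, -⟩, hj, -⟩, hkj⟩
    exact ⟨hk, hj, hkj⟩
  · rintro ⟨hk, hj, hkj⟩
    exact ⟨⟨⟨hk, (Nat.le_mul_of_pos_right k hj).trans hkj⟩, hj,
      (Nat.le_mul_of_pos_left j hk).trans hkj⟩, hkj⟩

lemma sum_Icc_mul_eq_sum_hyperbolaRegion (f g : ArithmeticFunction R) (X : ℕ) :
    ∑ n ∈ Icc 1 X, (f * g) n = ∑ p ∈ hyperbolaRegion X, f p.1 * g p.2 :=
  sum_Ioc_mul_eq_sum_prod_filter f g X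

lemma sum_hyperbolaRegion_filter_fst_le (f g : ArithmeticFunction R) (X Y : ℕ) :
    ∑ p ∈ hyperbolaRegion X with p.1 ≤ Y, f p.1 * g p.2 =
      ∑ k ∈ Icc 1 Y, f k * ∑ j ∈ Icc 1 (X / k), g j := by
  simp_rw [mul_sum]
  refine sum_finset_product _ _ _ fun ⟨k, j⟩ => ?_
  simp only [mem_filter, mem_hyperbolaRegion, mem_Icc]
  constructor
  · rintro ⟨⟨hk, hj, hkj⟩, hkY⟩
    exact ⟨⟨hk, hkY⟩, hj, (Nat.le_div_iff_mul_le hk).2 (by rwa [mul_comm])⟩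
  · rintro ⟨⟨hk, hkY⟩, hj, hjX⟩
    exact ⟨⟨hk, hj, by rw [mul_comm]; exact (Nat.le_div_iff_mul_le hk).1 hjX⟩, hkY⟩

lemma sum_hyperbolaRegion_filter_snd_le (f g : ArithmeticFunction R) (X Z : ℕ) :
    ∑ p ∈ hyperbolaRegion X with p.2 ≤ Z, f p.1 * g p.2 =
      ∑ j ∈ Icc 1 Z, (∑ k ∈ Icc 1 (X / j), f k) * g j := by
  simp_rw [sum_mul]
  refine sum_finset_product_right _ _ _ fun ⟨k, j⟩ => ?_
  simp only [mem_filter, mem_hyperbolaRegion, mem_Icc]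
  constructor
  · rintro ⟨⟨hk, hj, hkj⟩, hjZ⟩
    exact ⟨⟨hj, hjZ⟩, hk, (Nat.le_div_iff_mul_le hj).2 hkj⟩
  · rintro ⟨⟨hj, hjZ⟩, hk, hkX⟩
    exact ⟨⟨hk, hj, (Nat.le_div_iff_mul_le hj).1 hkX⟩, hjZ⟩

lemma sum_hyperbolaRegion_filter_le_and_le (f g : ArithmeticFunction R) {X Y Z : ℕ}
    (hYZ : Y * Z ≤ X) :
    ∑ p ∈ hyperbolaRegion X with p.1 ≤ Y ∧ p.2 ≤ Z, f p.1 * g p.2 =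
      (∑ k ∈ Icc 1 Y, f k) * ∑ j ∈ Icc 1 Z, g j := by
  rw [sum_mul_sum]
  refine sum_finset_product _ _ _ fun ⟨k, j⟩ => ?_
  simp only [mem_filter, mem_hyperbolaRegion, mem_Icc]
  constructor
  · rintro ⟨⟨hk, hj, -⟩, hkY, hjZ⟩
    exact ⟨⟨hk, hkY⟩, hj, hjZ⟩
  · rintro ⟨⟨hk, hkY⟩, hj, hjZ⟩
    exact ⟨⟨hk, hj, (Nat.mul_le_mul hkY hjZ).trans hYZ⟩, hkY, hjZ⟩

theorem sum_Icc_mul_eq_hyperbola (f g : ArithmeticFunction R) {X Y Z : ℕ}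
    (hYZ : Y * Z ≤ X) (hX : X < (Y + 1) * (Z + 1)) :
    ∑ n ∈ Icc 1 X, (f * g) n =
      ∑ k ∈ Icc 1 Y, f k * ∑ j ∈ Icc 1 (X / k), g j
        + ∑ j ∈ Icc 1 Z, (∑ k ∈ Icc 1 (X / j), f k) * g j
        - (∑ k ∈ Icc 1 Y, f k) * ∑ j ∈ Icc 1 Z, g j := by
  have hcover : ∀ p ∈ hyperbolaRegion X, p.1 ≤ Y ∨ p.2 ≤ Z := by
    intro p hp
    by_contra! h
    have := Nat.mul_le_mul (show Y + 1 ≤ p.1 from h.1) (show Z + 1 ≤ p.2 from h.2)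
    have := (mem_hyperbolaRegion.1 hp).2.2
    omega
  -- inclusion–exclusion for the two pieces `k ≤ Y` and `j ≤ Z`, which cover the region
  rw [← sum_hyperbolaRegion_filter_fst_le, ← sum_hyperbolaRegion_filter_snd_le,
    ← sum_hyperbolaRegion_filter_le_and_le f g hYZ, filter_and, ← sum_union_inter,
    ← filter_or, filter_true_of_mem hcover, add_sub_cancel_right,
    sum_Icc_mul_eq_sum_hyperbolaRegion]

theorem sum_Icc_floor_mul_eq_hyperbola {K : Type*} [Field K] [LinearOrder K]
    [IsStrictOrderedRing K] [FloorSemiring K] (f g : ArithmeticFunction R) {x y : K} (hx : 0 ≤ x)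
    (hy : 0 < y) :
    ∑ n ∈ Icc 1 ⌊x⌋₊, (f * g) n =
      ∑ k ∈ Icc 1 ⌊y⌋₊, f k * ∑ j ∈ Icc 1 ⌊x / k⌋₊, g j
        + ∑ j ∈ Icc 1 ⌊x / y⌋₊, (∑ k ∈ Icc 1 ⌊x / j⌋₊, f k) * g j
        - (∑ k ∈ Icc 1 ⌊y⌋₊, f k) * ∑ j ∈ Icc 1 ⌊x / y⌋₊, g j := by
  have hxy : y * (x / y) = x := mul_div_cancel₀ x hy.ne'
  simp_rw [Nat.floor_div_natCast]
  apply sum_Icc_mul_eq_hyperbola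
  · simpa only [hxy] using Nat.floor_mul_floor_le hy.le (div_nonneg hx hy.le)
  · simpa only [hxy] using Nat.floor_mul_lt_succ_mul_succ hy.le (div_nonneg hx hy.le)

open scoped ArithmeticFunction.zeta in
theorem pmul_moebius_log_eq_neg_vonMangoldt_mul_moebius :
    pmul (μ : ArithmeticFunction ℝ) log = -(Λ * μ) := by
  have h : pmul (μ : ArithmeticFunction ℝ) log * ζ = -Λ := by
    ext n
    rw [coe_mul_zeta_apply]
    simpa [pmul_apply, log_apply, intCoe_apply] using sum_moebius_mul_log_eq
  calc pmul (μ : ArithmeticFunction ℝ) log = pmul (μ : ArithmeticFunction ℝ) log * ζ * μ := by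
        rw [mul_assoc, coe_zeta_mul_coe_moebius, mul_one]
    _ = -(Λ * μ) := by rw [h, neg_mul]

end ArithmeticFunction

lemma neg_N_eq_sum_vonMangoldt_mul_moebius (x : ℝ) :
    -N x = ∑ n ∈ Icc 1 ⌊x⌋₊, (Λ * (μ : ArithmeticFunction ℝ)) n := by
  rw [N, ← sum_neg_distrib]
  refine sum_congr rfl fun n _ => ?_
  have := congrArg (· n) pmul_moebius_log_eq_neg_vonMangoldt_mul_moebius
  simp only [pmul_apply, intCoe_apply, log_apply, ArithmeticFunction.neg_apply] at this
  rw [this, neg_neg]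

lemma neg_N_eq_hyperbola {x y : ℝ} (hx : 0 ≤ x) (hy : 0 < y) :
    -N x = ∑ k ∈ Icc 1 ⌊y⌋₊, Λ k * M (x / k) + ∑ j ∈ Icc 1 ⌊x / y⌋₊, ψ (x / j) * μ j
      - ψ y * M (x / y) := by
  rw [neg_N_eq_sum_vonMangoldt_mul_moebius, sum_Icc_floor_mul_eq_hyperbola _ _ hx hy]
  simp only [intCoe_apply]
  rfl

theorem stmt0 (x y : ℝ) (hy : 1 ≤ y) (hyx : y ≤ x) :
    -N x / x =
      (∑ k ∈ Finset.Icc 1 ⌊y⌋₊, (Λ k / k) * (M (x / k) / (x / k)))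
      + (∑ j ∈ Finset.Icc 1 ⌊x / y⌋₊, ((μ j : ℝ) / j) * ((ψ (x / j) - x / j) / (x / j)))
      - ((ψ y - y) / y) * (M (x / y) / (x / y))
      + m₁ (x / y) := by
  have hy0 : 0 < y := by linarith
  have hx0 : 0 < x := by linarith
  have hΛM : ∀ k ∈ Icc 1 ⌊y⌋₊, (Λ k / k) * (M (x / k) / (x / k)) = Λ k * M (x / k) / x := by
    intro k hk
    have : (k : ℝ) ≠ 0 := (Nat.cast_pos.2 (mem_Icc.1 hk).1).ne'
    field_simp
  have hμψ : ∀ j ∈ Icc 1 ⌊x / y⌋₊, ((μ j : ℝ) / j) * ((ψ (x / j) - x / j) / (x / j)) =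
      ψ (x / j) * μ j / x - μ j / j := by
    intro j hj
    have : (j : ℝ) ≠ 0 := (Nat.cast_pos.2 (mem_Icc.1 hj).1).ne'
    field_simp
  rw [sum_congr rfl hΛM, sum_congr rfl hμψ, sum_sub_distrib, m₁, m, ← sum_div, ← sum_div,
    neg_N_eq_hyperbola hx0.le hy0]
  field_simp
  ring
end

section
/- One has ∫_1^∞ (1 - A(t))·t^{-2} dt = 1 - (log 2)/2 - (log 3)/3 - (log 5)/5 + (log 30)/30, where A(t) = ⌊t⌋ - ⌊t/2⌋ - ⌊t/3⌋ - ⌊t/5⌋ + ⌊t/30⌋; this value is approximately 0.07870 and in particular is less than 0.08. -/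
/-!
Writing `⌊x⌋ = x - {x}`, the linear parts cancel because `1 - 1/2 - 1/3 - 1/5 + 1/30 = 0`, so
`1 - A t = 1 + {t} - {t/2} - {t/3} - {t/5} + {t/30}` is bounded. The substitution `t = k u`
together with `{u} = u` on `(1/k, 1)` gives `∫_1^∞ {t/k} t⁻² dt = (log k + c) / k` with
`c = ∫_1^∞ {u} u⁻² du`, and the unknown constant `c` cancels by the same coefficient identity.
The numerical bound follows from `log 2 > 0.6931471803`, `2^84 < 3^53` and `2^65 < 5^28`.
-/

open Finset Real ArithmeticFunction
open scoped ArithmeticFunction.Moebius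

open MeasureTheory Set

lemma one_sub_A_eq (t : ℝ) :
    1 - A t = 1 + Int.fract t - Int.fract (t / 2) - Int.fract (t / 3) - Int.fract (t / 5)
      + Int.fract (t / 30) := by
  simp only [A, Int.fract]
  ring

lemma integrableOn_fract_div_mul_rpow_neg_two {a : ℝ} (ha : 0 < a) (k : ℝ) :
    IntegrableOn (fun t ↦ Int.fract (t / k) * t ^ (-2 : ℝ)) (Ioi a) := by
  refine (integrableOn_Ioi_rpow_of_lt (by norm_num) ha).bdd_mul (c := 1)
    ((measurable_fract.comp (measurable_id.div_const k)).aestronglyMeasurable) ?_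
  filter_upwards with t
  rw [Real.norm_eq_abs, abs_of_nonneg (Int.fract_nonneg _)]
  exact (Int.fract_lt_one _).le

lemma integral_Ioc_fract_mul_rpow_neg_two {k : ℝ} (hk : 1 ≤ k) :
    ∫ u in Ioc k⁻¹ 1, Int.fract u * u ^ (-2 : ℝ) = Real.log k := by
  have hk0 : 0 < k := one_pos.trans_le hk
  rw [integral_Ioc_eq_integral_Ioo, setIntegral_congr_fun measurableSet_Ioo (g := fun u ↦ u⁻¹),
    ← integral_Ioc_eq_integral_Ioo, ← intervalIntegral.integral_of_le (inv_le_one_of_one_le₀ hk),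
    integral_inv_of_pos (inv_pos.2 hk0) one_pos, one_div, inv_inv]
  intro u hu
  have hu0 : 0 < u := (inv_pos.2 hk0).trans hu.1
  simp only [Int.fract_eq_self.2 ⟨hu0.le, hu.2⟩, Real.rpow_neg_ofNat, zpow_neg, zpow_ofNat]
  field_simp

lemma integral_fract_div_mul_rpow_neg_two {k : ℝ} (hk : 1 ≤ k) :
    ∫ t in Ioi 1, Int.fract (t / k) * t ^ (-2 : ℝ)
      = (Real.log k + ∫ u in Ioi 1, Int.fract u * u ^ (-2 : ℝ)) / k := by
  have hk0 : 0 < k := one_pos.trans_le hk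
  have hint : IntegrableOn (fun u ↦ Int.fract u * u ^ (-2 : ℝ)) (Ioi k⁻¹) := by
    simpa using integrableOn_fract_div_mul_rpow_neg_two (inv_pos.2 hk0) 1
  have hsubst : ∫ t in Ioi 1, Int.fract (t / k) * t ^ (-2 : ℝ)
      = k⁻¹ * ∫ u in Ioi k⁻¹, Int.fract u * u ^ (-2 : ℝ) := by
    have := integral_comp_mul_left_Ioi' (fun t ↦ Int.fract (t / k) * t ^ (-2 : ℝ)) k⁻¹ hk0
    rw [mul_inv_cancel₀ hk0.ne'] at this
    rw [← this, smul_eq_mul, ← integral_const_mul, ← integral_const_mul]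
    refine setIntegral_congr_fun measurableSet_Ioi fun u _ ↦ ?_
    simp only [Real.rpow_neg_ofNat, zpow_neg, zpow_ofNat]
    field_simp
  rw [hsubst, ← intervalIntegral.integral_interval_add_Ioi hint (hint.mono_set ?_),
    intervalIntegral.integral_of_le (inv_le_one_of_one_le₀ hk),
    integral_Ioc_fract_mul_rpow_neg_two hk]
  · field_simp
  · exact Ioi_subset_Ioi (inv_le_one_of_one_le₀ hk)

lemma mul_log_lt_mul_log_of_pow_lt {a : ℝ} (b : ℝ) (ha : 0 < a) {p q : ℕ} (h : a ^ p < b ^ q) :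
    p * Real.log a < q * Real.log b := by
  rw [← Real.log_pow, ← Real.log_pow]
  exact Real.log_lt_log (pow_pos ha p) h

lemma one_sub_sum_log_div_lt :
    1 - Real.log 2 / 2 - Real.log 3 / 3 - Real.log 5 / 5 + Real.log 30 / 30 < 0.08 := by
  have l2 := Real.log_two_gt_d9
  have l3 := mul_log_lt_mul_log_of_pow_lt 3 two_pos (p := 84) (q := 53) (by norm_num)
  have l5 := mul_log_lt_mul_log_of_pow_lt 5 two_pos (p := 65) (q := 28) (by norm_num)
  have l30 : Real.log 30 = Real.log 2 + Real.log 3 + Real.log 5 := by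
    rw [show (30 : ℝ) = 2 * 3 * 5 by norm_num, Real.log_mul (by norm_num) (by norm_num),
      Real.log_mul (by norm_num) (by norm_num)]
  push_cast at l3 l5
  rw [l30]
  norm_num
  linarith

lemma integral_one_sub_A_mul_rpow_neg_two :
    ∫ t in Ioi 1, (1 - A t) * t ^ (-2 : ℝ)
      = 1 - Real.log 2 / 2 - Real.log 3 / 3 - Real.log 5 / 5 + Real.log 30 / 30 := by
  set g : ℝ → ℝ → ℝ := fun k t ↦ Int.fract (t / k) * t ^ (-2 : ℝ)
  have hg : ∀ k, IntegrableOn (g k) (Ioi 1) := integrableOn_fract_div_mul_rpow_neg_two one_pos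
  have hpow : IntegrableOn (fun t : ℝ ↦ t ^ (-2 : ℝ)) (Ioi 1) :=
    integrableOn_Ioi_rpow_of_lt (by norm_num) one_pos
  have hsplit : ∀ t, (1 - A t) * t ^ (-2 : ℝ)
      = t ^ (-2 : ℝ) + g 1 t - g 2 t - g 3 t - g 5 t + g 30 t := fun t ↦ by
    simp only [g, one_sub_A_eq, div_one]
    ring
  simp only [hsplit]
  rw [integral_add ?_ (hg 30), integral_sub ?_ (hg 5), integral_sub ?_ (hg 3),
    integral_sub ?_ (hg 2), integral_add hpow (hg 1)]
  · simp only [g]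
    rw [integral_Ioi_rpow_of_lt (by norm_num) one_pos,
      integral_fract_div_mul_rpow_neg_two le_rfl,
      integral_fract_div_mul_rpow_neg_two (k := 2) (by norm_num),
      integral_fract_div_mul_rpow_neg_two (k := 3) (by norm_num),
      integral_fract_div_mul_rpow_neg_two (k := 5) (by norm_num),
      integral_fract_div_mul_rpow_neg_two (k := 30) (by norm_num), Real.log_one]
    norm_num
    ring
  exacts [hpow.add (hg 1), (hpow.add (hg 1)).sub (hg 2), ((hpow.add (hg 1)).sub (hg 2)).sub (hg 3),
    (((hpow.add (hg 1)).sub (hg 2)).sub (hg 3)).sub (hg 5)]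

theorem stmt9 :
    (∫ t in Set.Ioi (1:ℝ), (1 - A t) * t ^ (-(2:ℝ)) : ℝ)
      = 1 - Real.log 2 / 2 - Real.log 3 / 3 - Real.log 5 / 5 + Real.log 30 / 30
    ∧ (∫ t in Set.Ioi (1:ℝ), (1 - A t) * t ^ (-(2:ℝ)) : ℝ) < 0.08 := by
  have h := integral_one_sub_A_mul_rpow_neg_two
  exact ⟨h, h ▸ one_sub_sum_log_div_lt⟩
end

section
/- Assume Q(x) ≤ (6/π²)·x + 0.5·√x for all x ≥ 1 and Q(x) ≤ (6/π²)·x + 0.1333·√x for all x ≥ 1664, where Q(x) = Σ_{k ≤ x} μ²(k). Then for every real X ≥ 10^4, one has Σ_{k ≤ X} μ²(k)/√k ≤ (12/π²)·√X + 0.17·log X. -/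
/-!
Abel summation writes `∑_{k ≤ n} μ²(k)/√k` as `Q(n)/√n + ∑_{k < n} Q(k) (1/√k - 1/√(k+1))`.
Inserting `Q(k) ≤ a k + c √k`, each summand is at most the increment of `a √k + (c/2) log k`
(by AM-GM and `1 - 1/t ≤ log t`), so the sum telescopes: the weak bound `c = 0.5` is used below
`1664` and the strong one `c = 0.1333` above it. The remaining constant is absorbed by
`0.17 log X - (0.1333/2) log X` once `log X ≥ 13 log 2`.
-/

open Finset Real ArithmeticFunction
open scoped ArithmeticFunction.Moebius

noncomputable def Q (x : ℝ) : ℝ := ∑ k ∈ Finset.Icc 1 ⌊x⌋₊, ((μ k : ℝ))^2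

theorem Finset.sum_Icc_one_by_parts {R : Type*} [CommRing R] (f w : ℕ → R) (n : ℕ) :
    ∑ k ∈ Icc 1 n, f k * w k
      = (∑ j ∈ Icc 1 n, f j) * w n
        + ∑ k ∈ Ico 1 n, (∑ j ∈ Icc 1 k, f j) * (w k - w (k + 1)) := by
  induction n with
  | zero => simp
  | succ n ih =>
    rcases Nat.eq_zero_or_pos n with rfl | hn
    · simp
    rw [sum_Icc_succ_top (by omega), sum_Icc_succ_top (by omega), ih, sum_Ico_succ_top hn]
    ring

lemma Q_natCast (n : ℕ) : Q n = ∑ k ∈ Icc 1 n, ((μ k : ℝ)) ^ 2 := by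
  simp [Q]

namespace Real

lemma mul_inv_sqrt_sub_inv_sqrt_le {x y : ℝ} (hx : 0 < x) (hxy : x ≤ y) :
    x * ((√x)⁻¹ - (√y)⁻¹) ≤ √y - √x := by
  have hsx : 0 < √x := sqrt_pos.2 hx
  have hsy : 0 < √y := sqrt_pos.2 (hx.trans_le hxy)
  have hgap : √y - √x - x * ((√x)⁻¹ - (√y)⁻¹) = (√y - √x) ^ 2 / √y := by
    field_simp
    linear_combination (√y - √x) * sq_sqrt hx.le
  rw [← sub_nonneg, hgap]
  positivity

lemma sqrt_mul_inv_sqrt_sub_inv_sqrt_le {x y : ℝ} (hx : 0 < x) (hxy : x ≤ y) :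
    √x * ((√x)⁻¹ - (√y)⁻¹) ≤ (log y - log x) / 2 := by
  have hsx : 0 < √x := sqrt_pos.2 hx
  have hsy : 0 < √y := sqrt_pos.2 (hx.trans_le hxy)
  have hlog := one_sub_inv_le_log_of_pos (div_pos hsy hsx)
  rw [log_div hsy.ne' hsx.ne', log_sqrt hx.le, log_sqrt (hx.le.trans hxy), inv_div] at hlog
  rw [mul_sub, mul_inv_cancel₀ hsx.ne', ← div_eq_mul_inv]
  linarith

lemma mul_add_mul_sqrt_mul_inv_sqrt_sub_inv_sqrt_le {a c x y : ℝ} (ha : 0 ≤ a) (hc : 0 ≤ c)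
    (hx : 0 < x) (hxy : x ≤ y) :
    (a * x + c * √x) * ((√x)⁻¹ - (√y)⁻¹) ≤ a * (√y - √x) + c / 2 * (log y - log x) := by
  have h₁ := mul_le_mul_of_nonneg_left (mul_inv_sqrt_sub_inv_sqrt_le hx hxy) ha
  have h₂ := mul_le_mul_of_nonneg_left (sqrt_mul_inv_sqrt_sub_inv_sqrt_le hx hxy) hc
  linarith

lemma mul_inv_sqrt_le_of_le {S a c x : ℝ} (hx : 0 < x) (hS : S ≤ a * x + c * √x) :
    S * (√x)⁻¹ ≤ a * √x + c := by
  have hsx : 0 < √x := sqrt_pos.2 hx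
  rw [← div_eq_mul_inv, div_le_iff₀ hsx, add_mul, mul_assoc, mul_self_sqrt hx.le]
  exact hS

end Real

lemma sum_Ico_mul_inv_sqrt_sub_inv_sqrt_le {S : ℕ → ℝ} {a c : ℝ} (ha : 0 ≤ a) (hc : 0 ≤ c)
    {m n : ℕ} (hm : 0 < m) (hmn : m ≤ n) (hS : ∀ k ∈ Ico m n, S k ≤ a * k + c * √k) :
    ∑ k ∈ Ico m n, S k * ((√(k : ℝ))⁻¹ - (√((k + 1 : ℕ) : ℝ))⁻¹)
      ≤ a * (√n - √m) + c / 2 * (Real.log n - Real.log m) := by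
  set g : ℕ → ℝ := fun k ↦ a * √k + c / 2 * Real.log k
  calc ∑ k ∈ Ico m n, S k * ((√(k : ℝ))⁻¹ - (√((k + 1 : ℕ) : ℝ))⁻¹)
      ≤ ∑ k ∈ Ico m n, (g (k + 1) - g k) := by
        refine sum_le_sum fun k hk ↦ ?_
        have hk₀ : (0 : ℝ) < k := by exact_mod_cast hm.trans_le (mem_Ico.1 hk).1
        have hkk : (k : ℝ) ≤ (k + 1 : ℕ) := by exact_mod_cast k.le_succ
        have hd : 0 ≤ (√(k : ℝ))⁻¹ - (√((k + 1 : ℕ) : ℝ))⁻¹ :=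
          sub_nonneg.2 (inv_anti₀ (sqrt_pos.2 hk₀) (sqrt_le_sqrt hkk))
        calc _ ≤ (a * k + c * √k) * ((√(k : ℝ))⁻¹ - (√((k + 1 : ℕ) : ℝ))⁻¹) :=
              mul_le_mul_of_nonneg_right (hS k hk) hd
          _ ≤ g (k + 1) - g k := by
              have := mul_add_mul_sqrt_mul_inv_sqrt_sub_inv_sqrt_le ha hc hk₀ hkk
              simp only [g]
              linarith
    _ = g n - g m := sum_Ico_sub g hmn
    _ = a * (√n - √m) + c / 2 * (Real.log n - Real.log m) := by ring

theorem stmt13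
    (hQ1 : ∀ x : ℝ, 1 ≤ x → Q x ≤ (6 / π^2) * x + 0.5 * Real.sqrt x)
    (hQ2 : ∀ x : ℝ, 1664 ≤ x → Q x ≤ (6 / π^2) * x + 0.1333 * Real.sqrt x) :
    ∀ X : ℝ, 10^4 ≤ X →
      (∑ k ∈ Finset.Icc 1 ⌊X⌋₊, ((μ k : ℝ))^2 / Real.sqrt k)
        ≤ (12 / π^2) * Real.sqrt X + 0.17 * Real.log X := by
  intro X hX
  set n := ⌊X⌋₊
  have hn : 10 ^ 4 ≤ n := Nat.le_floor (by exact_mod_cast hX)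
  have hnX : (n : ℝ) ≤ X := Nat.floor_le (by linarith)
  simp_rw [div_eq_mul_inv _ (√_)]
  rw [sum_Icc_one_by_parts, ← sum_Ico_consecutive _ (show 1 ≤ 1664 by norm_num)
    (show 1664 ≤ n by omega)]
  simp_rw [← Q_natCast]
  have h_head := mul_inv_sqrt_le_of_le (by positivity) (hQ2 n (by exact_mod_cast (by omega)))
  have h_low := sum_Ico_mul_inv_sqrt_sub_inv_sqrt_le (by positivity) (by norm_num) one_pos
    (show 1 ≤ 1664 by norm_num) fun k hk ↦ hQ1 k (by exact_mod_cast (mem_Ico.1 hk).1)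
  have h_high := sum_Ico_mul_inv_sqrt_sub_inv_sqrt_le (by positivity) (by norm_num)
    (show 0 < 1664 by norm_num) (show 1664 ≤ n by omega)
    fun k hk ↦ hQ2 k (by exact_mod_cast (mem_Ico.1 hk).1)
  simp only [Nat.cast_one, Nat.cast_ofNat, sqrt_one, Real.log_one] at h_low h_high
  have hπ : 0.604 ≤ 6 / π ^ 2 := by
    rw [le_div_iff₀ (by positivity)]
    nlinarith [pi_lt_d2, pi_pos]
  have h_sqrt : 6 / π ^ 2 * √n ≤ 6 / π ^ 2 * √X :=
    mul_le_mul_of_nonneg_left (sqrt_le_sqrt hnX) (by positivity)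
  have h_logn : Real.log n ≤ Real.log X := log_le_log (by positivity) hnX
  have h_log1664 : Real.log 1664 ≤ 11 * Real.log 2 := by
    have := log_le_log (by norm_num) (show (1664 : ℝ) ≤ 2 ^ 11 by norm_num)
    rwa [Real.log_pow, Nat.cast_ofNat] at this
  have h_logX : 13 * Real.log 2 ≤ Real.log X := by
    have := log_le_log (by norm_num) (show (2 : ℝ) ^ 13 ≤ X by linarith)
    rwa [Real.log_pow, Nat.cast_ofNat] at this
  rw [show (12 : ℝ) / π ^ 2 = 2 * (6 / π ^ 2) by ring]
  linarith [log_two_lt_d9]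
end
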